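/- Let $(M, \mu)$ be a measure space, let $(e_j)_{j \in J}$ be an orthonormal family in $L^2(M, \mu)$ with an eigenvalue map $\lambda : J \to [0,\infty)$, and let $d \geq 1$, $C_M > 0$. Suppose that for every $\eta \geq 0$, $\sum_{j : \lambda_j \in [\eta, \eta+1]} |e_j(x)|^2 \leq C_M \eta^{d-1}$ for $\mu$-almost every $x$ (in particular each such sum is over a finite set). Let $\mu_1, \ldots, \mu_n \geq 1$, let $S \subset \bigcup_{k=1}^n [\mu_k, \mu_k + 1]$ be a finite set, let $X_S = \{j : \lambda_j \in S\}$, and let $E \subset M$ be a measurable set of finite measure. Suppose $f \in L^2(M,\mu)$ is not almost everywhere zero and satisfies $\|f - 1_E f\|_{L^2} \leq \epsilon \|f\|_{L^2}$ and $\|f - \sum_{j \in X_S} \langle f, e_j\rangle e_j\|_{L^2} \leq \epsilon' \|f\|_{L^2}$, with $0 \leq \epsilon, \epsilon' < 1$ and $\epsilon + \epsilon' < 1$. Then $(1 - \epsilon - \epsilon')^2 \leq \mu(E) \cdot C_M \sum_{k=1}^n \mu_k^{d-1}$. -/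

import Mathlib

/-!
Let `g = ∑_{j ∈ X_S} ⟨f, e_j⟩ e_j`. The two concentration hypotheses and the triangle inequality give
`(1 - ε - ε') ‖f‖ ≤ ‖1_E g‖`. On the other hand, by Cauchy–Schwarz and Bessel,
`|g(x)|² ≤ ‖f‖² ∑_{j ∈ X_S} |e_j(x)|²`, and covering `X_S` by the clusters at the `μ_k` bounds the
last sum by `C_M ∑_k μ_k^{d-1}` almost everywhere. Integrating over `E` gives
`‖1_E g‖² ≤ μ(E) ‖f‖² C_M ∑_k μ_k^{d-1}`, and `‖f‖ ≠ 0` can be cancelled.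
-/

open MeasureTheory Finset ComplexConjugate

theorem Finset.sum_le_sum_sum_of_subset_biUnion {ι κ β : Type*} [DecidableEq κ]
    [AddCommMonoid β] [PartialOrder β] [IsOrderedAddMonoid β] {s : Finset κ} {I : Finset ι}
    {t : ι → Finset κ} (hs : s ⊆ I.biUnion t) {w : κ → β} (hw : ∀ j, 0 ≤ w j) :
    ∑ j ∈ s, w j ≤ ∑ i ∈ I, ∑ j ∈ t i, w j := by
  refine (sum_le_sum_of_subset_of_nonneg hs fun j _ _ => hw j).trans ?_
  rw [← sup_eq_biUnion]
  refine I.apply_sup_le_sum (f := fun u => ∑ j ∈ u, w j) sum_empty fun {u v} => ?_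
  rw [← sum_union_inter]
  exact le_add_of_nonneg_right (sum_nonneg fun j _ => hw j)

theorem norm_sum_mul_sq_le {ι R : Type*} [SeminormedRing R] (s : Finset ι) (c a : ι → R) :
    ‖∑ j ∈ s, c j * a j‖ ^ 2 ≤ (∑ j ∈ s, ‖c j‖ ^ 2) * ∑ j ∈ s, ‖a j‖ ^ 2 :=
  calc ‖∑ j ∈ s, c j * a j‖ ^ 2 ≤ (∑ j ∈ s, ‖c j‖ * ‖a j‖) ^ 2 := by
        gcongr
        exact (norm_sum_le _ _).trans (sum_le_sum fun j _ => norm_mul_le _ _)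
    _ ≤ _ := sum_mul_sq_le_sq_mul_sq _ _ _

namespace MeasureTheory

variable {α : Type*} [MeasurableSpace α] {μ : Measure α}

section Bessel

variable {𝕜 ι : Type*} [RCLike 𝕜]

theorem MemLp.inner_toLp_toLp {f g : α → 𝕜} (hf : MemLp f 2 μ) (hg : MemLp g 2 μ) :
    inner 𝕜 (hf.toLp f) (hg.toLp g) = ∫ x, g x * conj (f x) ∂μ := by
  rw [L2.inner_def]
  refine integral_congr_ae ?_
  filter_upwards [hf.coeFn_toLp, hg.coeFn_toLp] with x hfx hgx
  rw [RCLike.inner_apply, hfx, hgx]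

variable [DecidableEq ι] {e : ι → α → 𝕜}

theorem orthonormal_toLp_of_integral_mul_conj (he : ∀ j, MemLp (e j) 2 μ)
    (horth : ∀ i j, ∫ x, e i x * conj (e j x) ∂μ = if i = j then 1 else 0) :
    Orthonormal 𝕜 fun j => (he j).toLp (e j) :=
  orthonormal_iff_ite.2 fun i j => by
    rw [MemLp.inner_toLp_toLp, horth]
    exact if_congr eq_comm rfl rfl

theorem sum_norm_integral_mul_conj_sq_le (he : ∀ j, MemLp (e j) 2 μ)
    (horth : ∀ i j, ∫ x, e i x * conj (e j x) ∂μ = if i = j then 1 else 0) (s : Finset ι)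
    {f : α → 𝕜} (hf : MemLp f 2 μ) :
    ∑ j ∈ s, ‖∫ x, f x * conj (e j x) ∂μ‖ ^ 2 ≤ (eLpNorm f 2 μ).toReal ^ 2 := by
  simpa only [MemLp.inner_toLp_toLp, Lp.norm_toLp] using
    (orthonormal_toLp_of_integral_mul_conj he horth).sum_inner_products_le (s := s) (hf.toLp f)

end Bessel

variable {F : Type*} [NormedAddCommGroup F]

theorem eLpNorm_le_eLpNorm_sub_indicator_add {p : ENNReal} (hp : 1 ≤ p) {f g : α → F}
    (hf : AEStronglyMeasurable f μ) (hg : AEStronglyMeasurable g μ) {E : Set α}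
    (hE : MeasurableSet E) :
    eLpNorm f p μ ≤
      eLpNorm (f - E.indicator f) p μ + (eLpNorm (E.indicator g) p μ + eLpNorm (f - g) p μ) := by
  have hsplit : f = (f - E.indicator f) + (E.indicator g + E.indicator (f - g)) := by
    rw [← Set.indicator_add', add_sub_cancel, sub_add_cancel]
  calc eLpNorm f p μ ≤ eLpNorm (f - E.indicator f) p μ +
        (eLpNorm (E.indicator g) p μ + eLpNorm (E.indicator (f - g)) p μ) := by
        conv_lhs => rw [hsplit]
        refine (eLpNorm_add_le (hf.sub (hf.indicator hE))
          ((hg.indicator hE).add ((hf.sub hg).indicator hE)) hp).trans ?_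
        gcongr
        exact eLpNorm_add_le (hg.indicator hE) ((hf.sub hg).indicator hE) hp
    _ ≤ _ := by gcongr; exact eLpNorm_indicator_le _

theorem one_sub_sub_mul_toReal_eLpNorm_le {p : ENNReal} (hp : 1 ≤ p) {f g : α → F}
    (hf : MemLp f p μ) (hg : MemLp g p μ) {E : Set α} (hE : MeasurableSet E) {ε ε' : ℝ}
    (hε : 0 ≤ ε) (hε' : 0 ≤ ε')
    (hconc : eLpNorm (f - E.indicator f) p μ ≤ ENNReal.ofReal ε * eLpNorm f p μ)
    (hspec : eLpNorm (f - g) p μ ≤ ENNReal.ofReal ε' * eLpNorm f p μ) :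
    (1 - ε - ε') * (eLpNorm f p μ).toReal ≤ (eLpNorm (E.indicator g) p μ).toReal := by
  have hfin := hf.eLpNorm_ne_top
  have hgfin : eLpNorm (E.indicator g) p μ ≠ ⊤ := (hg.indicator hE).eLpNorm_ne_top
  have hbound : eLpNorm f p μ ≤ ENNReal.ofReal ε * eLpNorm f p μ +
      (eLpNorm (E.indicator g) p μ + ENNReal.ofReal ε' * eLpNorm f p μ) :=
    (eLpNorm_le_eLpNorm_sub_indicator_add hp hf.1 hg.1 hE).trans (by gcongr)
  have := ENNReal.toReal_mono (by finiteness) hbound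
  rw [ENNReal.toReal_add (by finiteness) (by finiteness), ENNReal.toReal_add hgfin (by finiteness),
    ENNReal.toReal_mul, ENNReal.toReal_mul, ENNReal.toReal_ofReal hε,
    ENNReal.toReal_ofReal hε'] at this
  linarith

theorem MemLp.toReal_eLpNorm_two_sq {f : α → F} (hf : MemLp f 2 μ) :
    (eLpNorm f 2 μ).toReal ^ 2 = ∫ x, ‖f x‖ ^ 2 ∂μ := by
  have hI : 0 ≤ ∫ x, ‖f x‖ ^ 2 ∂μ := integral_nonneg fun x => sq_nonneg _
  rw [hf.eLpNorm_eq_integral_rpow_norm two_ne_zero ENNReal.ofNat_ne_top]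
  simp only [ENNReal.toReal_ofNat, Real.rpow_two]
  rw [ENNReal.toReal_ofReal (Real.rpow_nonneg hI _)]
  exact Real.rpow_inv_natCast_pow (n := 2) hI two_ne_zero

theorem toReal_eLpNorm_indicator_sq_le {g : α → F} (hg : MemLp g 2 μ) {E : Set α}
    (hE : MeasurableSet E) (hEfin : μ E ≠ ⊤) {K : ℝ} (hK : ∀ᵐ x ∂μ, ‖g x‖ ^ 2 ≤ K) :
    (eLpNorm (E.indicator g) 2 μ).toReal ^ 2 ≤ μ.real E * K := by
  rw [eLpNorm_indicator_eq_eLpNorm_restrict hE, (hg.restrict E).toReal_eLpNorm_two_sq,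
    ← smul_eq_mul, ← setIntegral_const]
  have : IsFiniteMeasure (μ.restrict E) := isFiniteMeasure_restrict.2 hEfin
  exact integral_mono_ae ((hg.restrict E).integrable_norm_pow two_ne_zero) (integrable_const K)
    (ae_restrict_of_ae hK)

end MeasureTheory

open MeasureTheory

theorem ae_sum_norm_sq_le_of_subset_iUnion_Icc {M J κ F : Type*} [MeasurableSpace M]
    [DecidableEq J] [Fintype κ] [SeminormedAddCommGroup F] {μ : Measure M} {e : J → M → F}
    {lam : J → ℝ} {clus : ℝ → Finset J} (hclus : ∀ η j, j ∈ clus η ↔ lam j ∈ Set.Icc η (η + 1))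
    {B : ℝ → ℝ} (hcluster : ∀ η : ℝ, 0 ≤ η → ∀ᵐ x ∂μ, ∑ j ∈ clus η, ‖e j x‖ ^ 2 ≤ B η)
    {μs : κ → ℝ} (hμs : ∀ k, 0 ≤ μs k) {S : Finset ℝ} (hS : ↑S ⊆ ⋃ k, Set.Icc (μs k) (μs k + 1))
    {XS : Finset J} (hXS : ∀ j, j ∈ XS ↔ lam j ∈ S) :
    ∀ᵐ x ∂μ, ∑ j ∈ XS, ‖e j x‖ ^ 2 ≤ ∑ k, B (μs k) := by
  have hcover : XS ⊆ univ.biUnion fun k => clus (μs k) := fun j hj => by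
    obtain ⟨k, hk⟩ := Set.mem_iUnion.1 (hS ((hXS j).1 hj))
    exact mem_biUnion.2 ⟨k, mem_univ k, (hclus _ j).2 hk⟩
  filter_upwards [ae_all_iff.2 fun k => hcluster (μs k) (hμs k)] with x hx
  exact (sum_le_sum_sum_of_subset_biUnion hcover fun j => sq_nonneg _).trans
    (sum_le_sum fun k _ => hx k)

theorem statement10_general {M J : Type*} [MeasurableSpace M] [DecidableEq J] (μ : Measure M)
    (e : J → M → ℂ) (lam : J → ℝ)
    (he2 : ∀ j, MemLp (e j) 2 μ)
    (horth : ∀ i j, ∫ x, e i x * (starRingEnd ℂ) (e j x) ∂μ = if i = j then 1 else 0)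
    (d : ℕ) (CM : ℝ)
    (clus : ℝ → Finset J) (hclus : ∀ η j, j ∈ clus η ↔ lam j ∈ Set.Icc η (η + 1))
    (hcluster : ∀ η : ℝ, 0 ≤ η →
      ∀ᵐ x ∂μ, ∑ j ∈ clus η, ‖e j x‖ ^ 2 ≤ CM * η ^ (d - 1))
    (n : ℕ) (μs : Fin n → ℝ) (hμs : ∀ k, 1 ≤ μs k)
    (S : Finset ℝ) (hS : ↑S ⊆ ⋃ k, Set.Icc (μs k) (μs k + 1))
    (XS : Finset J) (hXS : ∀ j, j ∈ XS ↔ lam j ∈ S)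
    (E : Set M) (hE : MeasurableSet E) (hEfin : μ E < ⊤)
    (f : M → ℂ) (hf : MemLp f 2 μ) (hf0 : ¬ (f =ᵐ[μ] 0))
    (ε ε' : ℝ) (hε0 : 0 ≤ ε) (hε'0 : 0 ≤ ε')
    (hsum : ε + ε' < 1)
    (hconc : eLpNorm (f - E.indicator f) 2 μ ≤ ENNReal.ofReal ε * eLpNorm f 2 μ)
    (hspec : eLpNorm
        (f - fun x => ∑ j ∈ XS, (∫ y, f y * (starRingEnd ℂ) (e j y) ∂μ) * e j x) 2 μ
      ≤ ENNReal.ofReal ε' * eLpNorm f 2 μ) :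
    (1 - ε - ε') ^ 2 ≤ (μ E).toReal * (CM * ∑ k, μs k ^ (d - 1)) := by
  set g := fun x => ∑ j ∈ XS, (∫ y, f y * conj (e j y) ∂μ) * e j x
  set N := (eLpNorm f 2 μ).toReal
  have hg : MemLp g 2 μ := memLp_finsetSum XS fun j _ => (he2 j).const_mul _
  have hN : 0 < N := ENNReal.toReal_pos
    (by rwa [Ne, eLpNorm_eq_zero_iff hf.1 two_ne_zero]) hf.eLpNorm_ne_top
  have hlow := one_sub_sub_mul_toReal_eLpNorm_le one_le_two hf hg hE hε0 hε'0 hconc hspec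
  have hpt : ∀ᵐ x ∂μ, ‖g x‖ ^ 2 ≤ N ^ 2 * (CM * ∑ k, μs k ^ (d - 1)) := by
    filter_upwards [ae_sum_norm_sq_le_of_subset_iUnion_Icc hclus hcluster
      (fun k => zero_le_one.trans (hμs k)) hS hXS] with x hx
    rw [mul_sum]
    exact (norm_sum_mul_sq_le _ _ _).trans (mul_le_mul
      (sum_norm_integral_mul_conj_sq_le he2 horth XS hf) hx (sum_nonneg fun j _ => sq_nonneg _)
      (sq_nonneg _))
  have hup := toReal_eLpNorm_indicator_sq_le hg hE hEfin.ne hpt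
  refine le_of_mul_le_mul_right ?_ (pow_pos hN 2)
  calc (1 - ε - ε') ^ 2 * N ^ 2 = ((1 - ε - ε') * N) ^ 2 := by ring
    _ ≤ (eLpNorm (E.indicator g) 2 μ).toReal ^ 2 :=
        pow_le_pow_left₀ (mul_nonneg (by linarith) hN.le) hlow 2
    _ ≤ μ.real E * (N ^ 2 * (CM * ∑ k, μs k ^ (d - 1))) := hup
    _ = (μ E).toReal * (CM * ∑ k, μs k ^ (d - 1)) * N ^ 2 := by rw [measureReal_def]; ring

/-- Covering uncertainty principle: if the spectral clusters satisfy the sup-norm bound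
`∑_{λ_j ∈ [η, η+1]} |e_j(x)|² ≤ C_M η^{d-1}` a.e. for all `η ≥ 0`, the finite frequency
set `S` is covered by the unit intervals `[μ_k, μ_k + 1]`, `1 ≤ k ≤ n`, and a nonzero
`f ∈ L²` is `L²`-concentrated on `E` and spectrally concentrated on `X_S = {j : λ_j ∈ S}`,
then `(1-ε-ε')² ≤ μ(E) ⬝ C_M ∑_k μ_k^{d-1}`. -/
theorem statement10 {M J : Type*} [MeasurableSpace M] [DecidableEq J] (μ : Measure M)
    (e : J → M → ℂ) (lam : J → ℝ) (hlam : ∀ j, 0 ≤ lam j)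
    (he2 : ∀ j, MemLp (e j) 2 μ)
    (horth : ∀ i j, ∫ x, e i x * (starRingEnd ℂ) (e j x) ∂μ = if i = j then 1 else 0)
    (d : ℕ) (hd : 1 ≤ d) (CM : ℝ) (hCM : 0 < CM)
    (clus : ℝ → Finset J) (hclus : ∀ η j, j ∈ clus η ↔ lam j ∈ Set.Icc η (η + 1))
    (hcluster : ∀ η : ℝ, 0 ≤ η →
      ∀ᵐ x ∂μ, ∑ j ∈ clus η, ‖e j x‖ ^ 2 ≤ CM * η ^ (d - 1))
    (n : ℕ) (μs : Fin n → ℝ) (hμs : ∀ k, 1 ≤ μs k)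
    (S : Finset ℝ) (hS : ↑S ⊆ ⋃ k, Set.Icc (μs k) (μs k + 1))
    (XS : Finset J) (hXS : ∀ j, j ∈ XS ↔ lam j ∈ S)
    (E : Set M) (hE : MeasurableSet E) (hEfin : μ E < ⊤)
    (f : M → ℂ) (hf : MemLp f 2 μ) (hf0 : ¬ (f =ᵐ[μ] 0))
    (ε ε' : ℝ) (hε0 : 0 ≤ ε) (hε1 : ε < 1) (hε'0 : 0 ≤ ε') (hε'1 : ε' < 1)
    (hsum : ε + ε' < 1)
    (hconc : eLpNorm (f - E.indicator f) 2 μ ≤ ENNReal.ofReal ε * eLpNorm f 2 μ)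
    (hspec : eLpNorm
        (f - fun x => ∑ j ∈ XS, (∫ y, f y * (starRingEnd ℂ) (e j y) ∂μ) * e j x) 2 μ
      ≤ ENNReal.ofReal ε' * eLpNorm f 2 μ) :
    (1 - ε - ε') ^ 2 ≤ (μ E).toReal * (CM * ∑ k, μs k ^ (d - 1)) :=
  statement10_general μ e lam he2 horth d CM clus hclus hcluster n μs hμs S hS XS hXS E hE hEfin f
    hf hf0 ε ε' hε0 hε'0 hsum hconc hspec
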